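/- Let λ ∈ Z_+^n be weakly decreasing with λ_i = λ_{i+1} ⟹ λ_i = 0, having at least two zero entries, and let λ̊ ∈ Z_+^{n-2} be obtained from λ by removing two zero entries. Then the evaluation of the Schur P-function p_{λ,n} at x_{n-1} = t, x_n = -t equals the Schur P-function p_{λ̊,n-2} in the variables x_1,...,x_{n-2} (and in particular is independent of t). -/

import Mathlib

/-!
At `x_{n-1} = t`, `x_n = -t` the summand of `w` vanishes unless `w` sends both special variables
to zero parts of `λ`: otherwise they form a pair of the product, with factor
`(1 + t⁻¹ (-t)) / (1 - t⁻¹ (-t)) = 0`. Since `λ` is strict on its nonzero parts, `S_λ` permutes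
the zero parts arbitrarily, and the summands are invariant under right multiplication by `S_λ`;
so the surviving sum is `c` times the sum over the `w` fixing the last two positions, where `c` is
the number of ordered pairs of distinct zero parts, and `|S_λ| = c · |S_λ̊|` by the same count.
For `w` fixing the last two positions, the factors pairing `xᵢ` with `t` and with `-t` multiply
to `1`, which leaves the summand of `p_{λ̊,n-2}`.
-/

/-- Laurent polynomials in `n` variables over `ℚ`. -/
abbrev LP (n : ℕ) : Type := AddMonoidAlgebra ℚ (Fin n →₀ ℤ)

/-- Evaluation of a Laurent polynomial at a point with invertible coordinates. -/
noncomputable def lpEval {n : ℕ} (x : Fin n → ℚˣ) (f : LP n) : ℚ :=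
  Finsupp.sum f.coeff fun d c => c * ∏ i, ((x i ^ (d i) : ℚˣ) : ℚ)

/-- `f` is symmetric (invariant under the `Sₙ`-action permuting the variables). -/
def IsSymmLP {n : ℕ} (f : LP n) : Prop :=
  ∀ (σ : Equiv.Perm (Fin n)) (x : Fin n → ℚˣ), lpEval (x ∘ σ) f = lpEval x f

/-- The point obtained by substituting `x i = t`, `x j = -t`, others given by `y`. -/
def substPair {n : ℕ} (i j : Fin n) (t : ℚˣ) (y : Fin n → ℚˣ) : Fin n → ℚˣ :=
  fun k => if k = i then t else if k = j then -t else y k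

/-- The variable `xᵢ` as a Laurent polynomial. -/
noncomputable def Xv {n : ℕ} (i : Fin n) : LP n :=
  AddMonoidAlgebra.single (Finsupp.single i (1 : ℤ)) (1 : ℚ)

/-- The point of (ℚˣ)ⁿ whose first n-2 coordinates are y and whose last two
coordinates are t and -t. -/
def embedPt {n : ℕ} (t : ℚˣ) (y : Fin (n - 2) → ℚˣ) : Fin n → ℚˣ :=
  fun i => if h : (i : ℕ) < n - 2 then y ⟨i, h⟩ else if (i : ℕ) = n - 2 then t else -t

/-- The value at x of the defining rational expression of the Schur P-function
p_{λ,n} = Σ_{w ∈ Sₙ/S_λ} w( x^λ ∏_{i<j, λᵢ>λⱼ} (1+xᵢ⁻¹xⱼ)/(1-xᵢ⁻¹xⱼ) ).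
Since the summand depends only on the coset w·S_λ, the sum over coset
representatives equals the sum over all of Sₙ divided by |S_λ|. -/
noncomputable def schurPVal (n : ℕ) (lam : Fin n → ℤ) (x : Fin n → ℚˣ) : ℚ :=
  ((Fintype.card {σ : Equiv.Perm (Fin n) // ∀ i, lam (σ i) = lam i} : ℚ))⁻¹ *
  ∑ σ : Equiv.Perm (Fin n),
    (∏ i, ((x (σ i) ^ (lam i) : ℚˣ) : ℚ)) *
    ∏ p ∈ Finset.univ.filter
        (fun p : Fin n × Fin n => p.1 < p.2 ∧ lam p.2 < lam p.1),
      (1 + ((x (σ p.1) : ℚ))⁻¹ * (x (σ p.2) : ℚ)) /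
      (1 - ((x (σ p.1) : ℚ))⁻¹ * (x (σ p.2) : ℚ))

open Equiv Finset

section Counting

variable {α M : Type*} [Fintype α] [DecidableEq α] [AddCommMonoid M]

/-- Split the sum according to the pair `(σ⁻¹ a, σ⁻¹ b)`; right multiplication by `h` maps the
fibre over `(p, q)` bijectively onto the permutations fixing `a` and `b`. -/
theorem sum_perm_eq_card_offDiag_nsmul (s : Finset α) {a b : α} (hab : a ≠ b)
    (T : Perm α → M) (hT : ∀ σ, T σ ≠ 0 → σ⁻¹ a ∈ s ∧ σ⁻¹ b ∈ s)
    (hmove : ∀ p ∈ s, ∀ q ∈ s, p ≠ q →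
      ∃ h : Perm α, h a = p ∧ h b = q ∧ ∀ σ, T (σ * h) = T σ) :
    ∑ σ, T σ = #s.offDiag • ∑ σ with σ a = a ∧ σ b = b, T σ := by
  rw [← sum_filter_of_ne (p := fun σ : Perm α => (σ⁻¹ a, σ⁻¹ b) ∈ s.offDiag)
      fun σ _ hσ => mem_offDiag.2 ⟨(hT σ hσ).1, (hT σ hσ).2, fun h => hab (σ⁻¹.injective h)⟩,
    ← sum_fiberwise_of_maps_to (g := fun σ : Perm α => (σ⁻¹ a, σ⁻¹ b))
      fun σ hσ => (mem_filter.1 hσ).2,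
    ← sum_const]
  refine sum_congr rfl fun ⟨p, q⟩ hpq => ?_
  obtain ⟨hp, hq, hne⟩ := mem_offDiag.1 hpq
  obtain ⟨h, rfl, rfl, hTh⟩ := hmove p hp q hq hne
  refine sum_nbij' (· * h) (· * h⁻¹) (fun σ hσ => ?_) (fun σ hσ => ?_) (by simp) (by simp)
    (fun σ _ => (hTh σ).symm)
  · simp only [mem_filter, mem_univ, true_and, Prod.mk.injEq] at hσ ⊢
    simp [← hσ.2.1, ← hσ.2.2]
  · simp only [mem_filter, mem_univ, true_and, Prod.mk.injEq, mul_inv_rev, inv_inv,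
      Perm.mul_apply] at hσ ⊢
    rw [Perm.inv_eq_iff_eq.2 hσ.1.symm, Perm.inv_eq_iff_eq.2 hσ.2.symm]
    exact ⟨hpq, rfl, rfl⟩

end Counting

section PermStab

variable {α β : Type*}

def permStab (f : α → β) : Subgroup (Perm α) where
  carrier := {σ | ∀ i, f (σ i) = f i}
  mul_mem' hσ hτ i := (hσ _).trans (hτ i)
  one_mem' _ := rfl
  inv_mem' {σ} hσ i := by simpa using (hσ (σ⁻¹ i)).symm

variable [DecidableEq α] {f : α → β}

theorem swap_mem_permStab {a b : α} (h : f a = f b) : swap a b ∈ permStab f := fun i => by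
  rw [swap_apply_def]
  split_ifs with hia hib
  · rw [hia, h]
  · rw [hib, h]
  · rfl

theorem exists_mem_permStab_apply_eq {a b p q : α} (hab : a ≠ b) (hpq : p ≠ q)
    (hb : f b = f a) (hp : f p = f a) (hq : f q = f a) :
    ∃ h ∈ permStab f, h a = p ∧ h b = q := by
  set q' := swap a p q
  have hq'a : q' ≠ a := by simpa [q', swap_apply_eq_iff] using hpq.symm
  have hq' : f b = f q' := by
    simp only [q', swap_apply_def]
    split_ifs <;> simp [*]
  refine ⟨swap a p * swap b q', mul_mem (swap_mem_permStab hp.symm) (swap_mem_permStab hq'),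
    ?_, ?_⟩
  · simp [swap_apply_of_ne_of_ne hab hq'a.symm]
  · simp [q']

end PermStab

section SchurPTerm

variable {ι : Type*} [Fintype ι] [LinearOrder ι]

noncomputable def schurPTerm (lam : ι → ℤ) (z : ι → ℚˣ) : ℚ :=
  (∏ i, ((z i ^ (lam i) : ℚˣ) : ℚ)) *
    ∏ p ∈ univ.filter (fun p : ι × ι => p.1 < p.2 ∧ lam p.2 < lam p.1),
      (1 + ((z p.1 : ℚ))⁻¹ * (z p.2 : ℚ)) / (1 - ((z p.1 : ℚ))⁻¹ * (z p.2 : ℚ))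

theorem schurPVal_eq_sum_schurPTerm (n : ℕ) (lam : Fin n → ℤ) (x : Fin n → ℚˣ) :
    schurPVal n lam x =
      (Fintype.card {σ : Perm (Fin n) // ∀ i, lam (σ i) = lam i} : ℚ)⁻¹ *
        ∑ σ : Perm (Fin n), schurPTerm lam (x ∘ σ) :=
  rfl

variable {lam : ι → ℤ}

theorem schurPTerm_comp_of_mem_permStab (hlam : Antitone lam) {τ : Perm ι}
    (hτ : τ ∈ permStab lam) (z : ι → ℚˣ) : schurPTerm lam (z ∘ τ) = schurPTerm lam z := by
  have hpairs : univ.filter (fun p : ι × ι => p.1 < p.2 ∧ lam p.2 < lam p.1) =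
      univ.filter (fun p : ι × ι => lam p.2 < lam p.1) :=
    filter_congr fun p _ => and_iff_right_of_imp hlam.reflect_lt
  unfold schurPTerm
  rw [hpairs]
  congr 1
  · exact Fintype.prod_equiv τ _ _ fun i => by simp [hτ i]
  · exact prod_equiv (τ.prodCongr τ) (by simp [hτ _]) fun p _ => rfl

theorem schurPTerm_eq_zero (hlam : Antitone lam) {p q : ι} (hpq : lam q < lam p)
    {z : ι → ℚˣ} (hz : (z p : ℚ) + z q = 0) : schurPTerm lam z = 0 := by
  refine mul_eq_zero_of_right _ (prod_eq_zero (i := (p, q)) ?_ ?_)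
  · simp [hlam.reflect_lt hpq, hpq]
  · simp [eq_neg_of_add_eq_zero_right hz]

theorem eq_zero_of_schurPTerm_ne_zero (hlam : Antitone lam)
    (hstrict : ∀ i j, i < j → lam i = lam j → lam i = 0) {z : ι → ℚˣ}
    (hT : schurPTerm lam z ≠ 0) {p q : ι} (hpq : p ≠ q) (hz : (z p : ℚ) + z q = 0) :
    lam p = 0 ∧ lam q = 0 := by
  have heq : lam p = lam q := by
    by_contra hne
    rcases lt_or_gt_of_ne hne with h | h
    · exact hT (schurPTerm_eq_zero hlam h (by rwa [add_comm]))
    · exact hT (schurPTerm_eq_zero hlam h hz)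
  rcases lt_or_gt_of_ne hpq with h | h
  · exact ⟨hstrict p q h heq, heq ▸ hstrict p q h heq⟩
  · exact ⟨heq ▸ hstrict q p h heq.symm, hstrict q p h heq.symm⟩

end SchurPTerm

section FinAppend

theorem cayley_mul_cayley_neg {u t : ℚ} (hu : u ≠ 0) (ht : u ≠ t) (ht' : u ≠ -t) :
    (1 + u⁻¹ * t) / (1 - u⁻¹ * t) * ((1 + u⁻¹ * -t) / (1 - u⁻¹ * -t)) = 1 := by
  have h1 : u - t ≠ 0 := sub_ne_zero.2 ht
  have h2 : u + t ≠ 0 := by rwa [← sub_neg_eq_add, sub_ne_zero]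
  field_simp
  ring

variable {N : ℕ}

theorem schurPTerm_append (lam : Fin (N + 2) → ℤ) (ha : lam (Fin.natAdd N 0) = 0)
    (hb : lam (Fin.natAdd N 1) = 0) (t : ℚˣ) (w : Fin N → ℚˣ)
    (hw : ∀ i, (w i : ℚ) ≠ t ∧ (w i : ℚ) ≠ -t) :
    schurPTerm lam (Fin.append w ![t, -t]) = schurPTerm (lam ∘ Fin.castAdd 2) w := by
  have hlt (i : Fin N) (k : Fin 2) : Fin.castAdd 2 i < Fin.natAdd N k := by
    simp [Fin.lt_def]; omega
  have hnlt (i : Fin N) (k : Fin 2) : ¬ Fin.natAdd N k < Fin.castAdd 2 i := by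
    simp [Fin.lt_def]; omega
  have hcast (i j : Fin N) : Fin.castAdd 2 i < Fin.castAdd 2 j ↔ i < j := by
    rw [Fin.lt_def, Fin.lt_def]; simp
  have hcancel (i : Fin N) : (if 0 < lam (Fin.castAdd 2 i) then
      (1 + (w i : ℚ)⁻¹ * t) / (1 - (w i : ℚ)⁻¹ * t) else 1) *
      (if 0 < lam (Fin.castAdd 2 i) then
      (1 + (w i : ℚ)⁻¹ * (-t : ℚˣ)) / (1 - (w i : ℚ)⁻¹ * (-t : ℚˣ)) else 1) = 1 := by
    split_ifs
    · rw [Units.val_neg]; exact cayley_mul_cayley_neg (w i).ne_zero (hw i).1 (hw i).2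
    · exact one_mul 1
  unfold schurPTerm
  congr 1
  · simp [Fin.prod_univ_add, ha, hb]
  · simp only [prod_filter, Fintype.prod_prod_type, Fin.prod_univ_add, Fin.prod_univ_two,
      Fin.append_left, Fin.append_right, Matrix.cons_val_zero, Matrix.cons_val_one, ha, hb, hlt,
      hnlt, true_and, false_and, if_false, prod_const_one, mul_one, hcast, hcancel,
      lt_self_iff_false, and_false, one_mul, Function.comp_apply]

def permCastLE {m n : ℕ} (h : m ≤ n) :
    Perm (Fin m) ≃ {σ : Perm (Fin n) // ∀ i : Fin n, ¬ (i : ℕ) < m → σ i = i} :=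
  (Fin.castLEquiv h).permCongr.trans (Perm.subtypeEquivSubtypePerm _)

theorem permCastLE_apply_castLE {m n : ℕ} (h : m ≤ n) (τ : Perm (Fin m)) (i : Fin m) :
    (permCastLE h τ : Perm (Fin n)) (Fin.castLE h i) = Fin.castLE h (τ i) := by
  change Perm.ofSubtype _ (Fin.castLEquiv h i : Fin n) = _
  rw [Perm.ofSubtype_apply_coe]
  simp [permCongr_apply]

theorem permCastLE_apply_of_le {m n : ℕ} (h : m ≤ n) (τ : Perm (Fin m)) {i : Fin n}
    (hi : m ≤ (i : ℕ)) : (permCastLE h τ : Perm (Fin n)) i = i :=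
  (permCastLE h τ).2 i (not_lt.2 hi)

theorem append_comp_permCastLE {γ : Type*} (τ : Perm (Fin N)) (y : Fin N → γ) (v : Fin 2 → γ) :
    Fin.append y v ∘ (permCastLE (Nat.le_add_right N 2) τ : Perm (Fin (N + 2))) =
      Fin.append (y ∘ τ) v := by
  funext i
  refine Fin.addCases (fun j => ?_) (fun k => ?_) i
  · simp [Fin.castAdd, permCastLE_apply_castLE]
  · simp [permCastLE_apply_of_le]

end FinAppend

section Reduction

variable {N : ℕ}

theorem sum_fixing_natAdd_eq_sum_permCastLE {M : Type*} [AddCommMonoid M] (f : Perm (Fin (N + 2)) → M) :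
    ∑ σ with σ (Fin.natAdd N 0) = Fin.natAdd N 0 ∧ σ (Fin.natAdd N 1) = Fin.natAdd N 1, f σ =
      ∑ τ : Perm (Fin N), f (permCastLE (Nat.le_add_right N 2) τ) := by
  have hfix (σ : Perm (Fin (N + 2))) :
      (σ (Fin.natAdd N 0) = Fin.natAdd N 0 ∧ σ (Fin.natAdd N 1) = Fin.natAdd N 1) ↔
        ∀ i : Fin (N + 2), ¬ (i : ℕ) < N → σ i = i := by
    refine ⟨fun ⟨h0, h1⟩ i hi => ?_, fun h => ⟨h _ (by simp), h _ (by simp)⟩⟩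
    obtain ⟨k, rfl⟩ : ∃ k : Fin 2, i = Fin.natAdd N k :=
      ⟨⟨i - N, by omega⟩, by ext; simp; omega⟩
    fin_cases k <;> assumption
  rw [filter_congr fun σ _ => hfix σ,
    sum_subtype (p := fun σ : Perm (Fin (N + 2)) => ∀ i : Fin (N + 2), ¬ (i : ℕ) < N → σ i = i)
      _ (by simp)]
  exact (Fintype.sum_equiv (permCastLE _) _ _ fun _ => rfl).symm

theorem permCastLE_mem_permStab_iff (lam : Fin (N + 2) → ℤ) (τ : Perm (Fin N)) :
    (permCastLE (Nat.le_add_right N 2) τ : Perm (Fin (N + 2))) ∈ permStab lam ↔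
      τ ∈ permStab (lam ∘ Fin.castAdd 2) := by
  refine ⟨fun h i => ?_, fun h i => Fin.addCases (fun j => ?_) (fun k => ?_) i⟩
  · simpa [Fin.castAdd, permCastLE_apply_castLE] using h (Fin.castAdd 2 i)
  · simpa [Fin.castAdd, permCastLE_apply_castLE] using h j
  · rw [permCastLE_apply_of_le _ _ (by simp)]

theorem schurPVal_append (lam : Fin (N + 2) → ℤ) (hlam : Antitone lam)
    (hstrict : ∀ i j, i < j → lam i = lam j → lam i = 0)
    (ha : lam (Fin.natAdd N 0) = 0) (hb : lam (Fin.natAdd N 1) = 0) (t : ℚˣ) (y : Fin N → ℚˣ)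
    (hy : ∀ i, (y i : ℚ) ≠ t ∧ (y i : ℚ) ≠ -t) :
    schurPVal (N + 2) lam (Fin.append y ![t, -t]) = schurPVal N (lam ∘ Fin.castAdd 2) y := by
  set Z := univ.filter fun i => lam i = 0
  have hab : Fin.natAdd N (0 : Fin 2) ≠ Fin.natAdd N 1 := by simp [Fin.ext_iff]
  have hZ : ∀ p ∈ Z, ∀ q ∈ Z, p ≠ q →
      ∃ h ∈ permStab lam, h (Fin.natAdd N 0) = p ∧ h (Fin.natAdd N 1) = q :=
    fun p hp q hq hpq => exists_mem_permStab_apply_eq hab hpq (hb.trans ha.symm)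
      ((mem_filter.1 hp).2.trans ha.symm) ((mem_filter.1 hq).2.trans ha.symm)
  have hsum : ∑ σ : Perm (Fin (N + 2)), schurPTerm lam (Fin.append y ![t, -t] ∘ σ) =
      #Z.offDiag • ∑ τ : Perm (Fin N), schurPTerm (lam ∘ Fin.castAdd 2) (y ∘ τ) := by
    rw [sum_perm_eq_card_offDiag_nsmul Z hab _ (fun σ hσ => ?_) (fun p hp q hq hpq => ?_),
      sum_fixing_natAdd_eq_sum_permCastLE]
    · refine congrArg _ (sum_congr rfl fun τ _ => ?_)
      rw [append_comp_permCastLE, schurPTerm_append lam ha hb t (y ∘ τ) fun i => hy (τ i)]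
    · simp only [Z, mem_filter, mem_univ, true_and]
      exact eq_zero_of_schurPTerm_ne_zero hlam hstrict hσ (σ⁻¹.injective.ne hab) (by simp)
    · obtain ⟨h, hh, hap, hbq⟩ := hZ p hp q hq hpq
      refine ⟨h, hap, hbq, fun σ => ?_⟩
      rw [Perm.coe_mul, ← Function.comp_assoc, schurPTerm_comp_of_mem_permStab hlam hh]
  have hcard : (Fintype.card {σ : Perm (Fin (N + 2)) // ∀ i, lam (σ i) = lam i} : ℚ) =
      #Z.offDiag • (Fintype.card {τ : Perm (Fin N) //
        ∀ i, (lam ∘ Fin.castAdd 2) (τ i) = (lam ∘ Fin.castAdd 2) i} : ℚ) := by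
    rw [Fintype.card_subtype, Fintype.card_subtype, natCast_card_filter, natCast_card_filter,
      sum_perm_eq_card_offDiag_nsmul Z hab _ (fun σ hσ => ?_) (fun p hp q hq hpq => ?_),
      sum_fixing_natAdd_eq_sum_permCastLE]
    · exact congrArg _ (sum_congr rfl fun τ _ =>
        if_congr (permCastLE_mem_permStab_iff lam τ) rfl rfl)
    · have hσ' : σ⁻¹ ∈ permStab lam := inv_mem (of_not_not fun h => hσ (if_neg h))
      simp only [Z, mem_filter, mem_univ, true_and]
      exact ⟨(hσ' _).trans ha, (hσ' _).trans hb⟩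
    · obtain ⟨h, hh, hap, hbq⟩ := hZ p hp q hq hpq
      exact ⟨h, hap, hbq, fun σ => if_congr (Subgroup.mul_mem_cancel_right _ hh) rfl rfl⟩
  have hc : (#Z.offDiag : ℚ) ≠ 0 :=
    Nat.cast_ne_zero.2 <| card_ne_zero_of_mem (a := (Fin.natAdd N 0, Fin.natAdd N 1)) <|
      mem_offDiag.2 ⟨by simp [Z, ha], by simp [Z, hb], hab⟩
  rw [schurPVal_eq_sum_schurPTerm, schurPVal_eq_sum_schurPTerm, hsum, hcard, nsmul_eq_mul,
    nsmul_eq_mul, mul_inv, mul_mul_mul_comm, inv_mul_cancel₀ hc, one_mul]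

end Reduction

theorem embedPt_eq_append {N : ℕ} (t : ℚˣ) (y : Fin N → ℚˣ) :
    embedPt (n := N + 2) t y = Fin.append y ![t, -t] := by
  funext i
  refine Fin.addCases (fun j => ?_) (fun k => ?_) i
  · simp [embedPt]
  · fin_cases k <;> simp [embedPt]

/-- Let λ ∈ ℤ₊ⁿ be weakly decreasing with λᵢ = λⱼ (i<j) forcing
λᵢ = 0, and with its two last entries equal to 0 (so λ has at least two zero
entries, which lie at the end).  Let λ̊ ∈ ℤ₊^{n-2} be obtained by removing the
two zeros.  Then the evaluation of p_{λ,n} at x_{n-1} = t, xₙ = -t equals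
p_{λ̊,n-2} in x_1,...,x_{n-2}; in particular it is independent of t.  (Stated
as an identity of the defining rational expressions at all points where the
denominators are nonzero.) -/
theorem schurP_eval (n : ℕ) (hn : 2 ≤ n) (lam : Fin n → ℤ)
    (hdec : ∀ i j : Fin n, i ≤ j → lam j ≤ lam i)
    (hstrict : ∀ i j : Fin n, i < j → lam i = lam j → lam i = 0)
    (hz1 : lam ⟨n - 2, by omega⟩ = 0) (hz2 : lam ⟨n - 1, by omega⟩ = 0) :
    ∀ (t : ℚˣ) (y : Fin (n - 2) → ℚˣ),
      (∀ i j : Fin n, i ≠ j →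
        ((embedPt t y i : ℚ)) ≠ (embedPt t y j : ℚ)) →
      schurPVal n lam (embedPt t y) =
        schurPVal (n - 2) (fun i => lam (Fin.castLE (by omega) i)) y := by
  obtain ⟨N, rfl⟩ : ∃ N, n = N + 2 := ⟨n - 2, by omega⟩
  intro t y hdist
  rw [embedPt_eq_append (N := N)] at hdist ⊢
  have hy (i : Fin N) : (y i : ℚ) ≠ t ∧ (y i : ℚ) ≠ -t := by
    have hne (k : Fin 2) : Fin.castAdd 2 i ≠ Fin.natAdd N k := by simp [Fin.ext_iff]; omega
    simpa using And.intro (hdist _ _ (hne 0)) (hdist _ _ (hne 1))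
  exact schurPVal_append lam hdec hstrict hz1 hz2 t y hy
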